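/- arXiv:2207.06246 — 2 statements merged into one kernel-verified Lean document; each statement's English description precedes it below -/
import Mathlib

section
/- Let 𝔡, K ∈ ℕ, for every k ∈ {1,…,K} let ψ_k : ℝ^𝔡 → ℝ be continuously differentiable, let U = {θ ∈ ℝ^𝔡 : min_{k∈{1,…,K}} ‖(∇ψ_k)(θ)‖ > 0}, assume for all θ ∈ U and all k, l ∈ {1,…,K} with k ≠ l that ⟨(∇ψ_k)(θ), (∇ψ_l)(θ)⟩ = 0, and let γ ∈ C([0,∞),[0,∞)), 𝓛 ∈ C¹(U,ℝ), and Θ ∈ C([0,∞),U) satisfy for all t ∈ [0,∞) that γ(t) ‖ (∇𝓛)(Θ_t) − Σ_{k=1}^K ‖(∇ψ_k)(Θ_t)‖⁻² ⟨(∇𝓛)(Θ_t), (∇ψ_k)(Θ_t)⟩ (∇ψ_k)(Θ_t) ‖² = ‖(∇𝓛)(Θ_t)‖² and Θ_t = Θ_0 − ∫₀ᵗ γ(s) ( (∇𝓛)(Θ_s) − Σ_{k=1}^K ‖(∇ψ_k)(Θ_s)‖⁻² ⟨(∇𝓛)(Θ_s), (∇ψ_k)(Θ_s)⟩ (∇ψ_k)(Θ_s)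 ) ds. Then (i) for all k ∈ {1,…,K} and all t ∈ [0,∞) it holds that ψ_k(Θ_t) = ψ_k(Θ_0), and (ii) for all s, t ∈ [0,∞) with s ≤ t it holds that 𝓛(Θ_t) = 𝓛(Θ_s) − ∫_s^t ‖(∇𝓛)(Θ_u)‖² du. -/
/-!
Write `P θ` for the gradient of `𝓛` with its components along the pairwise orthogonal
vectors `∇ψ_k(θ)` removed, so that `Θ' = -γ P(Θ)`. Then `⟪∇ψ_k, P⟫ = 0`, which makes every
`ψ_k ∘ Θ` stationary, and `⟪∇𝓛, P⟫ = ‖P‖²`, so that the choice of `γ` turns the chain rule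
`(𝓛 ∘ Θ)' = -γ ⟪∇𝓛(Θ), P(Θ)⟫` into `(𝓛 ∘ Θ)' = -‖∇𝓛(Θ)‖²`.
-/

open MeasureTheory Set
open scoped RealInnerProductSpace

section Projection

variable {E ι : Type*} [NormedAddCommGroup E] [InnerProductSpace ℝ E] [Fintype ι]

/-- For pairwise orthogonal `u`, the orthogonal projection of `g` onto `(span (range u))ᗮ`. -/
noncomputable def projOrthCompl (u : ι → E) (g : E) : E :=
  g - ∑ k, ((‖u k‖ ^ 2)⁻¹ * ⟪g, u k⟫) • u k

theorem inner_projOrthCompl_eq_zero {u : ι → E} (hu : Pairwise fun k l => ⟪u k, u l⟫ = 0)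
    (g : E) (k : ι) : ⟪u k, projOrthCompl u g⟫ = 0 := by
  classical
  by_cases hk : u k = 0
  · simp [hk]
  have hsum : ∑ l, ((‖u l‖ ^ 2)⁻¹ * ⟪g, u l⟫) * ⟪u k, u l⟫ = ⟪g, u k⟫ := by
    rw [Finset.sum_eq_single k (fun l _ hl => by rw [hu hl.symm, mul_zero]) (by simp),
      real_inner_self_eq_norm_sq]
    field_simp
  simp only [projOrthCompl, inner_sub_right, inner_sum, real_inner_smul_right, hsum,
    real_inner_comm g, sub_self]

theorem inner_projOrthCompl_right {u : ι → E} (hu : Pairwise fun k l => ⟪u k, u l⟫ = 0)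
    (g : E) : ⟪g, projOrthCompl u g⟫ = ‖projOrthCompl u g‖ ^ 2 := by
  have hg : g = projOrthCompl u g + ∑ k, ((‖u k‖ ^ 2)⁻¹ * ⟪g, u k⟫) • u k := by
    simp [projOrthCompl]
  nth_rewrite 1 [hg]
  simp [inner_add_left, sum_inner, real_inner_smul_left, inner_projOrthCompl_eq_zero hu]

theorem ContinuousOn.projOrthCompl {X : Type*} [TopologicalSpace X] {s : Set X}
    {u : ι → X → E} {g : X → E} (hu : ∀ k, ContinuousOn (u k) s)
    (hu₀ : ∀ x ∈ s, ∀ k, u k x ≠ 0) (hg : ContinuousOn g s) :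
    ContinuousOn (fun x => projOrthCompl (fun k => u k x) (g x)) s := by
  refine hg.sub (continuousOn_finsetSum _ fun k _ => ContinuousOn.smul ?_ (hu k))
  refine ((((hu k).norm).pow 2).inv₀ fun x hx => ?_).mul (hg.inner (hu k))
  exact pow_ne_zero 2 (norm_ne_zero_iff.mpr (hu₀ x hx k))

end Projection

section Calculus

variable {E : Type*} [NormedAddCommGroup E] [InnerProductSpace ℝ E] [CompleteSpace E]

theorem ContDiffOn.continuousOn_gradient {f : E → ℝ} {s : Set E} {n : WithTop ℕ∞}
    (hf : ContDiffOn ℝ n f s) (hs : IsOpen s) (hn : 1 ≤ n) : ContinuousOn (gradient f) s :=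
  (InnerProductSpace.toDual ℝ E).symm.continuous.comp_continuousOn
    (hf.continuousOn_fderiv_of_isOpen hs hn)

theorem HasGradientAt.comp_hasDerivWithinAt {f : E → ℝ} {g : E} {Θ : ℝ → E} {v : E}
    {s : Set ℝ} {t : ℝ} (hf : HasGradientAt f g (Θ t)) (hΘ : HasDerivWithinAt Θ v s t) :
    HasDerivWithinAt (f ∘ Θ) ⟪g, v⟫ s t := by
  simpa only [InnerProductSpace.toDual_apply_apply] using
    hf.hasFDerivAt.comp_hasDerivWithinAt t hΘ

theorem hasDerivWithinAt_Ici_of_eq_sub_integral {Θ v : ℝ → E} {a t : ℝ}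
    (hv : ContinuousOn v (Ici a)) (hΘ : ∀ t, a ≤ t → Θ t = Θ a - ∫ s in a..t, v s)
    (ht : a ≤ t) : HasDerivWithinAt Θ (-v t) (Ici a) t := by
  set w : ℝ → E := fun s => v (max s a)
  have hw : Continuous w :=
    hv.comp_continuous (continuous_id.max continuous_const) fun s => le_max_right s a
  have hwv : ∀ s, a ≤ s → w s = v s := fun s hs => by simp [w, max_eq_left hs]
  have hΘw : ∀ t, a ≤ t → Θ t = Θ a - ∫ s in a..t, w s := fun t ht => by
    rw [hΘ t ht, intervalIntegral.integral_congr fun s hs => hwv s (uIcc_of_le ht ▸ hs).1]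
  have hF : HasDerivAt (fun u => Θ a - ∫ s in a..u, w s) (-w t) t := by
    simpa using ((hw.integral_hasStrictDerivAt a t).hasDerivAt).const_sub (Θ a)
  rw [← hwv t ht]
  exact hF.hasDerivWithinAt.congr (fun u hu => hΘw u hu) (hΘw t ht)

theorem comp_eq_add_integral_of_inner_gradient_eq {f : E → ℝ} {Θ Θ' : ℝ → E} {e : ℝ → ℝ}
    {a s t : ℝ} (has : a ≤ s) (hst : s ≤ t) (hf : ∀ u, a ≤ u → DifferentiableAt ℝ f (Θ u))
    (hΘ : ContinuousOn Θ (Ici a)) (hΘ' : ∀ u, a ≤ u → HasDerivWithinAt Θ (Θ' u) (Ici a) u)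
    (he : ContinuousOn e (Ici a)) (hfe : ∀ u, a ≤ u → ⟪gradient f (Θ u), Θ' u⟫ = e u) :
    f (Θ t) = f (Θ s) + ∫ u in s..t, e u := by
  have hsub : Icc s t ⊆ Ici a := fun u hu => has.trans hu.1
  have hcont : ContinuousOn (f ∘ Θ) (Icc s t) := fun u hu =>
    (hf u (hsub hu)).continuousAt.comp_continuousWithinAt (hΘ.mono hsub u hu)
  have hderiv : ∀ u ∈ Ioo s t, HasDerivWithinAt (f ∘ Θ) (e u) (Ioi u) u := fun u hu => by
    have hau : a ≤ u := hsub (Ioo_subset_Icc_self hu)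
    rw [← hfe u hau]
    exact (hf u hau).hasGradientAt.comp_hasDerivWithinAt
      ((hΘ' u hau).mono fun r hr => hau.trans (le_of_lt hr))
  have hint := intervalIntegral.integral_eq_sub_of_hasDeriv_right_of_le hst hcont hderiv
    ((uIcc_of_le hst ▸ he.mono hsub).intervalIntegrable)
  simp only [Function.comp_apply] at hint
  linarith

end Calculus

theorem stmt4_general
    (𝔡 K : ℕ)
    (ψ : Fin K → EuclideanSpace ℝ (Fin 𝔡) → ℝ)
    (hψ : ∀ k, ContDiff ℝ 1 (ψ k))
    (U : Set (EuclideanSpace ℝ (Fin 𝔡)))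
    (hUdef : U = {θ : EuclideanSpace ℝ (Fin 𝔡) | ∀ k : Fin K, 0 < ‖gradient (ψ k) θ‖})
    (horth : ∀ θ ∈ U, ∀ k l : Fin K, k ≠ l →
      ⟪gradient (ψ k) θ, gradient (ψ l) θ⟫ = 0)
    (γ : ℝ → ℝ) (hγcont : ContinuousOn γ (Set.Ici 0))
    (𝓛 : EuclideanSpace ℝ (Fin 𝔡) → ℝ) (h𝓛 : ContDiffOn ℝ 1 𝓛 U)
    (Θ : ℝ → EuclideanSpace ℝ (Fin 𝔡))
    (hΘcont : ContinuousOn Θ (Set.Ici 0))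
    (hΘU : ∀ t : ℝ, 0 ≤ t → Θ t ∈ U)
    (hγeq : ∀ t : ℝ, 0 ≤ t →
      γ t * ‖gradient 𝓛 (Θ t) - ∑ k : Fin K,
        ((‖gradient (ψ k) (Θ t)‖ ^ 2)⁻¹ * ⟪gradient 𝓛 (Θ t), gradient (ψ k) (Θ t)⟫) •
          gradient (ψ k) (Θ t)‖ ^ 2 = ‖gradient 𝓛 (Θ t)‖ ^ 2)
    (hflow : ∀ t : ℝ, 0 ≤ t → Θ t = Θ 0 - ∫ s in (0:ℝ)..t,
      γ s • (gradient 𝓛 (Θ s) - ∑ k : Fin K,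
        ((‖gradient (ψ k) (Θ s)‖ ^ 2)⁻¹ * ⟪gradient 𝓛 (Θ s), gradient (ψ k) (Θ s)⟫) •
          gradient (ψ k) (Θ s))) :
    (∀ k : Fin K, ∀ t : ℝ, 0 ≤ t → ψ k (Θ t) = ψ k (Θ 0)) ∧
    (∀ s t : ℝ, 0 ≤ s → s ≤ t →
      𝓛 (Θ t) = 𝓛 (Θ s) - ∫ u in s..t, ‖gradient 𝓛 (Θ u)‖ ^ 2) := by
  have hgψ : ∀ k, Continuous (gradient (ψ k)) := fun k =>
    continuousOn_univ.mp ((hψ k).contDiffOn.continuousOn_gradient isOpen_univ le_rfl)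
  have hψ₀ : ∀ θ ∈ U, ∀ k, gradient (ψ k) θ ≠ 0 := by
    rw [hUdef]
    exact fun θ hθ k => norm_pos_iff.mp (hθ k)
  have hUopen : IsOpen U := by
    rw [hUdef, ofPred_forall]
    exact isOpen_iInter_of_finite fun k => isOpen_lt continuous_const (hgψ k).norm
  set P := fun θ => projOrthCompl (fun k => gradient (ψ k) θ) (gradient 𝓛 θ)
  have hΘ' : ∀ t, 0 ≤ t → HasDerivWithinAt Θ (-(γ t • P (Θ t))) (Ici 0) t := fun t =>
    hasDerivWithinAt_Ici_of_eq_sub_integral (v := fun s => γ s • P (Θ s))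
      (hγcont.smul ((ContinuousOn.projOrthCompl (fun k => (hgψ k).continuousOn) hψ₀
        (h𝓛.continuousOn_gradient hUopen le_rfl)).comp hΘcont fun t ht => hΘU t ht)) hflow
  have horthΘ : ∀ t, 0 ≤ t → Pairwise fun k l =>
      ⟪gradient (ψ k) (Θ t), gradient (ψ l) (Θ t)⟫ = 0 := fun t ht k l =>
    horth _ (hΘU t ht) k l
  refine ⟨fun k t ht => ?_, fun s t hs hst => ?_⟩
  · simpa using comp_eq_add_integral_of_inner_gradient_eq (e := 0) le_rfl ht
      (fun u _ => (hψ k).differentiable one_ne_zero _) hΘcont hΘ' continuousOn_const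
      fun u hu => by
        rw [inner_neg_right, real_inner_smul_right, inner_projOrthCompl_eq_zero (horthΘ u hu),
          mul_zero, neg_zero, Pi.zero_apply]
  · have h𝓛Θ : ContinuousOn (fun u => gradient 𝓛 (Θ u)) (Ici 0) :=
      (h𝓛.continuousOn_gradient hUopen le_rfl).comp hΘcont fun t ht => hΘU t ht
    have := comp_eq_add_integral_of_inner_gradient_eq (e := fun u => -‖gradient 𝓛 (Θ u)‖ ^ 2)
      hs hst (fun u hu => (h𝓛.differentiableOn one_ne_zero).differentiableAt
        (hUopen.mem_nhds (hΘU u hu))) hΘcont hΘ' (h𝓛Θ.norm.pow 2).neg fun u hu => by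
        rw [inner_neg_right, real_inner_smul_right, inner_projOrthCompl_right (horthΘ u hu)]
        exact congrArg Neg.neg (hγeq u hu)
    rw [this, intervalIntegral.integral_neg, sub_eq_add_neg]

/-- Corollary 2.6 (Gradient flow dynamics on submanifolds with rescaled time):
if `γ` is chosen so that the projected gradient has the same decay of the energy as the
standard gradient flow, then the `ψ k` are conserved and the energy decreases at the
standard rate. -/
theorem stmt4
    (𝔡 K : ℕ)
    (ψ : Fin K → EuclideanSpace ℝ (Fin 𝔡) → ℝ)
    (hψ : ∀ k, ContDiff ℝ 1 (ψ k))
    (U : Set (EuclideanSpace ℝ (Fin 𝔡)))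
    (hUdef : U = {θ : EuclideanSpace ℝ (Fin 𝔡) | ∀ k : Fin K, 0 < ‖gradient (ψ k) θ‖})
    (horth : ∀ θ ∈ U, ∀ k l : Fin K, k ≠ l →
      ⟪gradient (ψ k) θ, gradient (ψ l) θ⟫ = 0)
    (γ : ℝ → ℝ) (hγcont : ContinuousOn γ (Set.Ici 0)) (hγnonneg : ∀ t, 0 ≤ t → 0 ≤ γ t)
    (𝓛 : EuclideanSpace ℝ (Fin 𝔡) → ℝ) (h𝓛 : ContDiffOn ℝ 1 𝓛 U)
    (Θ : ℝ → EuclideanSpace ℝ (Fin 𝔡))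
    (hΘcont : ContinuousOn Θ (Set.Ici 0))
    (hΘU : ∀ t : ℝ, 0 ≤ t → Θ t ∈ U)
    (hγeq : ∀ t : ℝ, 0 ≤ t →
      γ t * ‖gradient 𝓛 (Θ t) - ∑ k : Fin K,
        ((‖gradient (ψ k) (Θ t)‖ ^ 2)⁻¹ * ⟪gradient 𝓛 (Θ t), gradient (ψ k) (Θ t)⟫) •
          gradient (ψ k) (Θ t)‖ ^ 2 = ‖gradient 𝓛 (Θ t)‖ ^ 2)
    (hflow : ∀ t : ℝ, 0 ≤ t → Θ t = Θ 0 - ∫ s in (0:ℝ)..t,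
      γ s • (gradient 𝓛 (Θ s) - ∑ k : Fin K,
        ((‖gradient (ψ k) (Θ s)‖ ^ 2)⁻¹ * ⟪gradient 𝓛 (Θ s), gradient (ψ k) (Θ s)⟫) •
          gradient (ψ k) (Θ s))) :
    (∀ k : Fin K, ∀ t : ℝ, 0 ≤ t → ψ k (Θ t) = ψ k (Θ 0)) ∧
    (∀ s t : ℝ, 0 ≤ s → s ≤ t →
      𝓛 (Θ t) = 𝓛 (Θ s) - ∫ u in s..t, ‖gradient 𝓛 (Θ u)‖ ^ 2) :=
  stmt4_general 𝔡 K ψ hψ U hUdef horth γ hγcont 𝓛 h𝓛 Θ hΘcont hΘU hγeq hflow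
end

section
/- For every ε > 0 it holds that sup_{t ∈ [0,∞)} [ ‖Θ(t)‖ · 𝟙_{[ε,∞)}(|Θ₁(t)|) · 𝟙_{{1}}(μ(I^{Θ(t)})) ] < ∞, where μ denotes Lebesgue measure on ℝ; i.e., the gradient flow trajectory is bounded on the set of times t at which |Θ₁(t)| ≥ ε and the activity interval I^{Θ(t)} has Lebesgue measure 1. -/
/-!
The flow preserves `g`: the field `𝔊` is orthogonal to `∇g` wherever the projection formula is
imposed, and `∇g = 0` at the remaining points, where `g` attains its minimum. It also does not
increase `𝓛`, because `d/dt 𝓛(Θ t) = -‖𝔊(Θ t)‖²` for almost every `t`. Both facts follow from the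
fundamental theorem of calculus for the absolutely continuous functions `g ∘ Θ` and `𝓛 ∘ Θ`:
`𝔊` is bounded along the trajectory on compact time intervals, so `Θ` is Lipschitz there, while
`g` and `𝓛` are Lipschitz on balls. Hence `‖Θ t‖² = 1 + Θ₃(t)²` and `𝓛(Θ t) ≤ 𝓛(Θ 0)`.

If `I^θ` has full measure, the neuron is affine almost everywhere on `[0,1]`, so
`𝓛(θ) = ∫₀¹ (θ₃θ₁(s - 1/2) + f̄ - f(s))² ds ≥ θ₃²θ₁²/24 - ∫₀¹ (f̄ - f)²`, which bounds `Θ₃(t)²`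
by `24 (𝓛(Θ 0) + ∫₀¹ (f̄ - f)²) / ε²` whenever `|Θ₁(t)| ≥ ε`.
-/

open MeasureTheory Real Set
open scoped RealInnerProductSpace

/-- The mean value `f̄ = ∫₀¹ f(x) dx` of the target function. -/
noncomputable def fbar (f : ℝ → ℝ) : ℝ := ∫ s in (0:ℝ)..1, f s

/-- `m(θ) = ∫₀¹ max{θ₁ s + θ₂, 0} ds`. -/
noncomputable def mfun (θ : EuclideanSpace ℝ (Fin 3)) : ℝ :=
  ∫ s in (0:ℝ)..1, max (θ 0 * s + θ 1) 0

/-- The risk function `𝓛`. -/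
noncomputable def riskL (f : ℝ → ℝ) (θ : EuclideanSpace ℝ (Fin 3)) : ℝ :=
  ∫ s in (0:ℝ)..1, (θ 2 * (max (θ 0 * s + θ 1) 0 - mfun θ) + fbar f - f s) ^ 2

/-- `g(θ) = θ₁² + θ₂²`; the manifold `ℳ` is `g⁻¹(1)`. -/
noncomputable def gfun (θ : EuclideanSpace ℝ (Fin 3)) : ℝ := θ 0 ^ 2 + θ 1 ^ 2

/-- The activity interval `I^θ = {s ∈ [0,1] : θ₁ s + θ₂ > 0}`. -/
def Iact (θ : EuclideanSpace ℝ (Fin 3)) : Set ℝ :=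
  {s ∈ Set.Icc (0:ℝ) 1 | 0 < θ 0 * s + θ 1}

open Metric
open scoped NNReal Interval

local notation "ℝ³" => EuclideanSpace ℝ (Fin 3)

theorem AbsolutelyContinuousOnInterval.le_of_ae_hasDerivAt_nonpos {f f' : ℝ → ℝ} {a b : ℝ}
    (hab : a ≤ b) (hf : AbsolutelyContinuousOnInterval f a b)
    (hf' : ∀ᵐ x, x ∈ Icc a b → HasDerivAt f (f' x) x) (hf'0 : ∀ x ∈ Icc a b, f' x ≤ 0) :
    f b ≤ f a := by
  have hderiv : deriv f ≤ᵐ[volume.restrict (Icc a b)] fun _ => 0 := by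
    rw [Filter.EventuallyLE, ae_restrict_iff' measurableSet_Icc]
    filter_upwards [hf'] with x hx hxab
    rw [(hx hxab).deriv]
    exact hf'0 x hxab
  have := intervalIntegral.integral_mono_ae_restrict hab hf.intervalIntegrable_deriv
    intervalIntegrable_const hderiv
  simpa [hf.integral_deriv_eq_sub] using this

theorem IsCompact.exists_bound_of_locally_bounded {X F : Type*} [PseudoMetricSpace X] [Norm F]
    {g : X → F} {K : Set X} (hK : IsCompact K)
    (hg : ∀ x ∈ K, ∃ r > (0:ℝ), ∃ C : ℝ, ∀ y ∈ ball x r, ‖g y‖ ≤ C) :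
    ∃ C, ∀ y ∈ K, ‖g y‖ ≤ C := by
  refine hK.induction_on ⟨0, by simp⟩ (fun s t hst ⟨C, hC⟩ => ⟨C, fun y hy => hC y (hst hy)⟩)
    (fun s t ⟨C, hC⟩ ⟨D, hD⟩ => ⟨max C D, ?_⟩) (fun x hx => ?_)
  · rintro y (hy | hy)
    · exact (hC y hy).trans (le_max_left _ _)
    · exact (hD y hy).trans (le_max_right _ _)
  · obtain ⟨r, hr, C, hC⟩ := hg x hx
    exact ⟨ball x r, mem_nhdsWithin_of_mem_nhds (ball_mem_nhds x hr), C, hC⟩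

theorem HasGradientAt.comp_hasDerivAt {F : Type*} [NormedAddCommGroup F]
    [InnerProductSpace ℝ F] [CompleteSpace F] {φ : F → ℝ} {v w : F} {γ : ℝ → F} {t : ℝ}
    (hφ : HasGradientAt φ v (γ t)) (hγ : HasDerivAt γ w t) :
    HasDerivAt (fun s => φ (γ s)) ⟪v, w⟫ t := by
  have h := (hasGradientAt_iff_hasFDerivAt.1 hφ).comp_hasDerivAt t hγ
  exact (by simpa using h : HasDerivAt (φ ∘ γ) ⟪v, w⟫ t)

theorem inner_sub_inner_smul_eq_zero {F : Type*} [NormedAddCommGroup F] [InnerProductSpace ℝ F]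
    (a b : F) : ⟪b, a - ((‖b‖ ^ 2)⁻¹ * ⟪a, b⟫) • b⟫ = 0 := by
  rcases eq_or_ne b 0 with rfl | hb
  · simp
  rw [inner_sub_right, real_inner_smul_right, real_inner_self_eq_norm_sq, real_inner_comm]
  field_simp
  ring

theorem inner_sub_inner_smul_eq_norm_sq {F : Type*} [NormedAddCommGroup F]
    [InnerProductSpace ℝ F] (a b : F) :
    ⟪a, a - ((‖b‖ ^ 2)⁻¹ * ⟪a, b⟫) • b⟫ = ‖a - ((‖b‖ ^ 2)⁻¹ * ⟪a, b⟫) • b‖ ^ 2 := by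
  set c := (‖b‖ ^ 2)⁻¹ * ⟪a, b⟫
  have h : ⟪b, a - c • b⟫ = 0 := inner_sub_inner_smul_eq_zero a b
  rw [← real_inner_self_eq_norm_sq, inner_sub_left a (c • b), real_inner_smul_left, h, mul_zero,
    sub_zero]

section IntegralEquation

variable {E : Type*} [NormedAddCommGroup E] [NormedSpace ℝ E] {Φ v : ℝ → E} {T : ℝ}

theorem continuousOn_of_eq_sub_integral (hT : 0 ≤ T) (hv : IntervalIntegrable v volume 0 T)
    (hΦ : ∀ t ∈ Icc 0 T, Φ t = Φ 0 - ∫ u in (0:ℝ)..t, v u) : ContinuousOn Φ (Icc 0 T) := by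
  have hprim := intervalIntegral.continuousOn_primitive_interval
    ((intervalIntegrable_iff_integrableOn_Icc_of_le hT).1 hv |>.mono_set (uIcc_of_le hT).subset)
  rw [uIcc_of_le hT] at hprim
  exact (continuousOn_const.sub hprim).congr hΦ

theorem lipschitzOnWith_of_eq_sub_integral {M : ℝ≥0} (hv : IntervalIntegrable v volume 0 T)
    (hM : ∀ u ∈ Icc 0 T, ‖v u‖ ≤ M) (hΦ : ∀ t ∈ Icc 0 T, Φ t = Φ 0 - ∫ u in (0:ℝ)..t, v u) :
    LipschitzOnWith M Φ (Icc 0 T) := by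
  have hv' : ∀ t ∈ Icc 0 T, IntervalIntegrable v volume 0 t := fun t ht =>
    hv.mono_set (uIcc_subset_uIcc left_mem_uIcc (Icc_subset_uIcc ht))
  refine LipschitzOnWith.of_dist_le_mul fun x hx y hy => ?_
  rw [hΦ x hx, hΦ y hy, dist_eq_norm, sub_sub_sub_cancel_left,
    intervalIntegral.integral_interval_sub_left (hv' y hy) (hv' x hx), Real.dist_eq,
    abs_sub_comm]
  exact intervalIntegral.norm_integral_le_of_norm_le_const fun u hu =>
    hM u (uIcc_subset_Icc hx hy (Ioc_subset_Icc_self hu))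

theorem ae_hasDerivAt_of_eq_sub_integral [CompleteSpace E] (hv : IntervalIntegrable v volume 0 T)
    (hΦ : ∀ t ∈ Icc 0 T, Φ t = Φ 0 - ∫ u in (0:ℝ)..t, v u) :
    ∀ᵐ t, t ∈ Icc 0 T → HasDerivAt Φ (-v t) t := by
  have h0 : ∀ᵐ t : ℝ, t ≠ 0 := by simp [ae_iff, measure_singleton]
  have hT : ∀ᵐ t : ℝ, t ≠ T := by simp [ae_iff, measure_singleton]
  filter_upwards [hv.ae_hasDerivAt_integral, h0, hT] with t ht ht0 htT htIcc
  have hprim := ht (Icc_subset_uIcc htIcc) 0 left_mem_uIcc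
  have h := (hasDerivAt_const t (Φ 0)).sub hprim
  rw [zero_sub] at h
  refine h.congr_of_eventuallyEq <| Filter.eventually_of_mem
    (Ioo_mem_nhds (htIcc.1.lt_of_ne' ht0) (htIcc.2.lt_of_ne htT)) fun x hx => ?_
  exact hΦ x (Ioo_subset_Icc_self hx)

theorem absolutelyContinuousOnInterval_comp_of_eq_sub_integral {g : E → E} {φ : E → ℝ}
    (hg : ∀ x, ∃ r > (0:ℝ), ∃ C : ℝ, ∀ y ∈ ball x r, ‖g y‖ ≤ C)
    (hφ : ∀ R : ℝ≥0, ∃ K, LipschitzOnWith K φ (closedBall 0 R)) (hT : 0 ≤ T)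
    (hv : IntervalIntegrable (fun u => g (Φ u)) volume 0 T)
    (hΦ : ∀ t ∈ Icc 0 T, Φ t = Φ 0 - ∫ u in (0:ℝ)..t, g (Φ u)) :
    AbsolutelyContinuousOnInterval (fun t => φ (Φ t)) 0 T := by
  have hcont := continuousOn_of_eq_sub_integral hT hv hΦ
  obtain ⟨R, hR⟩ := isCompact_Icc.exists_bound_of_continuousOn hcont
  obtain ⟨M, hM⟩ := (isCompact_Icc.image_of_continuousOn hcont).exists_bound_of_locally_bounded
    fun x _ => hg x
  obtain ⟨K, hK⟩ := hφ R.toNNReal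
  have hΦlip := lipschitzOnWith_of_eq_sub_integral (M := M.toNNReal) hv
    (fun u hu => (hM _ (mem_image_of_mem Φ hu)).trans (Real.le_coe_toNNReal M)) hΦ
  have hmaps : MapsTo Φ (Icc 0 T) (closedBall 0 R.toNNReal) := fun u hu =>
    mem_closedBall_zero_iff.2 ((hR u hu).trans (Real.le_coe_toNNReal R))
  rw [← uIcc_of_le hT] at hΦlip hmaps
  exact (hK.comp hΦlip hmaps).absolutelyContinuousOnInterval

end IntegralEquation

theorem lipschitzOnWith_intervalIntegral {X E : Type*} [PseudoMetricSpace X]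
    [NormedAddCommGroup E] [NormedSpace ℝ E] {F : X → ℝ → E} {S : Set X} {K : ℝ≥0} {a b : ℝ}
    (hF : ∀ x ∈ S, IntervalIntegrable (F x) volume a b)
    (hK : ∀ s ∈ Ι a b, LipschitzOnWith K (fun x => F x s) S) :
    LipschitzOnWith (K * ‖b - a‖₊) (fun x => ∫ s in a..b, F x s) S := by
  refine LipschitzOnWith.of_dist_le_mul fun x hx y hy => ?_
  rw [dist_eq_norm, ← intervalIntegral.integral_sub (hF x hx) (hF y hy), NNReal.coe_mul,
    coe_nnnorm, Real.norm_eq_abs, mul_right_comm]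
  exact intervalIntegral.norm_integral_le_of_norm_le_const fun s hs => by
    rw [← dist_eq_norm]
    exact (hK s hs).dist_le_mul x hx y hy

theorem LipschitzOnWith.mul_of_abs_le {X : Type*} [PseudoMetricSpace X] {u w : X → ℝ}
    {S : Set X} {Ku Kw A B : ℝ≥0} (hu : LipschitzOnWith Ku u S) (hw : LipschitzOnWith Kw w S)
    (hA : ∀ x ∈ S, |u x| ≤ A) (hB : ∀ x ∈ S, |w x| ≤ B) :
    LipschitzOnWith (A * Kw + B * Ku) (fun x => u x * w x) S := by
  refine LipschitzOnWith.of_dist_le_mul fun x hx y hy => ?_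
  have hsplit : u x * w x - u y * w y = u x * (w x - w y) + w y * (u x - u y) := by ring
  have hu' := hu.dist_le_mul x hx y hy
  have hw' := hw.dist_le_mul x hx y hy
  rw [Real.dist_eq] at hu' hw' ⊢
  rw [hsplit, NNReal.coe_add, NNReal.coe_mul, NNReal.coe_mul]
  calc |u x * (w x - w y) + w y * (u x - u y)|
      ≤ |u x| * |w x - w y| + |w y| * |u x - u y| := by
        simpa only [abs_mul] using abs_add_le (u x * (w x - w y)) (w y * (u x - u y))
    _ ≤ A * (Kw * dist x y) + B * (Ku * dist x y) := by
        gcongr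
        exacts [hA x hx, hB y hy]
    _ = (A * Kw + B * Ku) * dist x y := by ring

theorem EuclideanSpace.abs_apply_le_norm {ι : Type*} [Fintype ι] (x : EuclideanSpace ℝ ι)
    (i : ι) : |x i| ≤ ‖x‖ := by
  simpa using PiLp.norm_apply_le x i

theorem EuclideanSpace.lipschitzWith_apply {ι : Type*} [Fintype ι] (i : ι) :
    LipschitzWith 1 (fun x : EuclideanSpace ℝ ι => x i) :=
  LipschitzWith.of_dist_le_mul fun x y => by
    simpa [Real.dist_eq, dist_eq_norm] using abs_apply_le_norm (x - y) i

def neuron (θ : ℝ³) (s : ℝ) : ℝ := max (θ 0 * s + θ 1) 0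

theorem continuous_neuron (θ : ℝ³) : Continuous (neuron θ) := by
  unfold neuron; fun_prop

theorem lipschitzWith_neuron {s : ℝ} (hs : s ∈ Icc (0:ℝ) 1) :
    LipschitzWith 2 (fun θ => neuron θ s) := by
  refine LipschitzWith.of_dist_le_mul fun θ θ' => ?_
  have h0 := EuclideanSpace.abs_apply_le_norm (θ - θ') 0
  have h1 := EuclideanSpace.abs_apply_le_norm (θ - θ') 1
  simp only [PiLp.sub_apply] at h0 h1
  rw [Real.dist_eq, dist_eq_norm]
  calc |neuron θ s - neuron θ' s| ≤ |(θ 0 * s + θ 1) - (θ' 0 * s + θ' 1)| :=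
        abs_max_sub_max_le_abs _ _ _
    _ = |(θ 0 - θ' 0) * s + (θ 1 - θ' 1)| := by ring_nf
    _ ≤ |θ 0 - θ' 0| * 1 + |θ 1 - θ' 1| := by
        refine (abs_add_le _ _).trans ?_
        rw [abs_mul, abs_of_nonneg hs.1]
        gcongr
        exact hs.2
    _ ≤ 2 * ‖θ - θ'‖ := by push_cast; linarith

theorem abs_neuron_le {s : ℝ} (hs : s ∈ Icc (0:ℝ) 1) (θ : ℝ³) : |neuron θ s| ≤ 2 * ‖θ‖ := by
  simpa [Real.dist_eq, neuron] using (lipschitzWith_neuron hs).dist_le_mul θ 0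

theorem mfun_eq_integral_neuron (θ : ℝ³) : mfun θ = ∫ s in (0:ℝ)..1, neuron θ s := rfl

theorem lipschitzWith_mfun : LipschitzWith 2 mfun := by
  have h := lipschitzOnWith_intervalIntegral (S := univ) (a := 0) (b := 1)
    (fun θ _ => (continuous_neuron θ).intervalIntegrable 0 1)
    (fun s hs => (lipschitzWith_neuron (Ioc_subset_Icc_self (by simpa using hs))).lipschitzOnWith)
  rw [lipschitzOnWith_univ] at h
  simp only [sub_zero, nnnorm_one, mul_one] at h
  exact h

theorem abs_mfun_le (θ : ℝ³) : |mfun θ| ≤ 2 * ‖θ‖ := by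
  simpa [Real.dist_eq, mfun, neuron] using lipschitzWith_mfun.dist_le_mul θ 0

noncomputable def riskResidual (f : ℝ → ℝ) (θ : ℝ³) (s : ℝ) : ℝ :=
  θ 2 * (neuron θ s - mfun θ) + fbar f - f s

theorem riskL_eq_integral_riskResidual_sq (f : ℝ → ℝ) (θ : ℝ³) :
    riskL f θ = ∫ s in (0:ℝ)..1, riskResidual f θ s ^ 2 := rfl

theorem abs_fbar_le {f : ℝ → ℝ} {C : ℝ} (hC : ∀ s ∈ Icc (0:ℝ) 1, |f s| ≤ C) : |fbar f| ≤ C := by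
  simpa [fbar] using intervalIntegral.norm_integral_le_of_norm_le_const (a := 0) (b := 1)
    fun s hs => (Real.norm_eq_abs (f s)).trans_le (hC s (Ioc_subset_Icc_self (by simpa using hs)))

theorem abs_neuron_sub_mfun_le {s : ℝ} (hs : s ∈ Icc (0:ℝ) 1) (θ : ℝ³) :
    |neuron θ s - mfun θ| ≤ 4 * ‖θ‖ := by
  linarith [abs_sub (neuron θ s) (mfun θ), abs_neuron_le hs θ, abs_mfun_le θ]

theorem abs_riskResidual_le {f : ℝ → ℝ} {C : ℝ} (hC : ∀ s ∈ Icc (0:ℝ) 1, |f s| ≤ C) {s : ℝ}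
    (hs : s ∈ Icc (0:ℝ) 1) (θ : ℝ³) : |riskResidual f θ s| ≤ 4 * ‖θ‖ ^ 2 + 2 * C := by
  have h2 : |θ 2| * |neuron θ s - mfun θ| ≤ ‖θ‖ * (4 * ‖θ‖) := by
    gcongr
    exacts [EuclideanSpace.abs_apply_le_norm θ 2, abs_neuron_sub_mfun_le hs θ]
  have htri := abs_add_three (θ 2 * (neuron θ s - mfun θ)) (fbar f) (-f s)
  rw [abs_mul, abs_neg, ← sub_eq_add_neg] at htri
  rw [riskResidual]
  linarith [abs_fbar_le hC, hC s hs]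

theorem lipschitzOnWith_riskResidual (f : ℝ → ℝ) {s : ℝ} (hs : s ∈ Icc (0:ℝ) 1) (R : ℝ≥0) :
    LipschitzOnWith (8 * R) (fun θ => riskResidual f θ s) (closedBall 0 R) := by
  have hprod := (EuclideanSpace.lipschitzWith_apply (2 : Fin 3)).lipschitzOnWith.mul_of_abs_le
    ((lipschitzWith_neuron hs).sub lipschitzWith_mfun).lipschitzOnWith (A := R) (B := 4 * R)
    (fun θ hθ => (EuclideanSpace.abs_apply_le_norm θ 2).trans (mem_closedBall_zero_iff.1 hθ))
    (fun θ hθ => by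
      simpa using (abs_neuron_sub_mfun_le hs θ).trans
        (by gcongr; exact mem_closedBall_zero_iff.1 hθ))
  have hK : (R * (2 + 2) + 4 * R * 1 : ℝ≥0) = 8 * R := by ring
  rw [hK] at hprod
  refine LipschitzOnWith.of_dist_le_mul fun x hx y hy => ?_
  simpa only [riskResidual, add_sub_assoc, dist_add_right] using hprod.dist_le_mul x hx y hy

theorem continuousOn_riskResidual {f : ℝ → ℝ} (hf : ContinuousOn f (Icc 0 1)) (θ : ℝ³) :
    ContinuousOn (riskResidual f θ) (Icc 0 1) := by
  have : Continuous fun s => θ 2 * (neuron θ s - mfun θ) + fbar f := by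
    have := continuous_neuron θ
    fun_prop
  exact this.continuousOn.sub hf

theorem exists_lipschitzOnWith_riskL {f : ℝ → ℝ} (hf : ContinuousOn f (Icc 0 1)) (R : ℝ≥0) :
    ∃ K, LipschitzOnWith K (riskL f) (closedBall 0 R) := by
  obtain ⟨C, hC⟩ := isCompact_Icc.exists_bound_of_continuousOn hf
  have hC' : ∀ s ∈ Icc (0:ℝ) 1, |f s| ≤ C.toNNReal := fun s hs =>
    (hC s hs).trans (Real.le_coe_toNNReal C)
  set B : ℝ≥0 := 4 * R ^ 2 + 2 * C.toNNReal
  have hB : ∀ s ∈ Icc (0:ℝ) 1, ∀ θ ∈ closedBall (0 : ℝ³) R, |riskResidual f θ s| ≤ B :=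
    fun s hs θ hθ => (abs_riskResidual_le hC' hs θ).trans (by
      push_cast [B]
      gcongr
      exact mem_closedBall_zero_iff.1 hθ)
  have hsq : ∀ s ∈ Icc (0:ℝ) 1, LipschitzOnWith (B * (8 * R) + B * (8 * R))
      (fun θ => riskResidual f θ s ^ 2) (closedBall 0 R) := fun s hs => by
    simpa only [sq] using (lipschitzOnWith_riskResidual f hs R).mul_of_abs_le
      (lipschitzOnWith_riskResidual f hs R) (hB s hs) (hB s hs)
  refine ⟨_, lipschitzOnWith_intervalIntegral (fun θ _ => ?_)
    fun s hs => hsq s (Ioc_subset_Icc_self (by simpa using hs))⟩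
  exact ((continuousOn_riskResidual hf θ).pow 2).intervalIntegrable_of_Icc zero_le_one

theorem volume_Icc_diff_Iact {θ : ℝ³} (hθ : (volume (Iact θ)).toReal = 1) :
    volume (Icc (0:ℝ) 1 \ Iact θ) = 0 := by
  have hsub : Iact θ ⊆ Icc 0 1 := fun s hs => hs.1
  have hmeas : MeasurableSet (Iact θ) :=
    measurableSet_Icc.inter <| measurableSet_lt measurable_const <|
      (measurable_const.mul measurable_id).add measurable_const
  rw [ENNReal.toReal_eq_one_iff] at hθ
  rw [measure_sdiff hsub hmeas.nullMeasurableSet (by simp [hθ]), hθ, Real.volume_Icc]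
  simp

theorem ae_neuron_eq_of_volume_Iact {θ : ℝ³} (hθ : (volume (Iact θ)).toReal = 1) :
    ∀ᵐ s, s ∈ Ι (0:ℝ) 1 → neuron θ s = θ 0 * s + θ 1 := by
  rw [ae_iff]
  refine measure_mono_null (fun s hs => ?_) (volume_Icc_diff_Iact hθ)
  obtain ⟨hs01, hne⟩ := Classical.not_imp.1 hs
  rw [uIoc_of_le zero_le_one] at hs01
  exact ⟨Ioc_subset_Icc_self hs01, fun hact => hne (max_eq_left hact.2.le)⟩

theorem mfun_eq_of_volume_Iact {θ : ℝ³} (hθ : (volume (Iact θ)).toReal = 1) :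
    mfun θ = θ 0 / 2 + θ 1 := by
  rw [mfun_eq_integral_neuron, intervalIntegral.integral_congr_ae (ae_neuron_eq_of_volume_Iact hθ),
    intervalIntegral.integral_add (Continuous.intervalIntegrable (by fun_prop) _ _)
      (Continuous.intervalIntegrable (by fun_prop) _ _), intervalIntegral.integral_const_mul]
  simp [integral_id]
  ring

theorem riskL_eq_of_volume_Iact (f : ℝ → ℝ) {θ : ℝ³} (hθ : (volume (Iact θ)).toReal = 1) :
    riskL f θ = ∫ s in (0:ℝ)..1, (θ 2 * θ 0 * (s - 1 / 2) + (fbar f - f s)) ^ 2 := by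
  rw [riskL_eq_integral_riskResidual_sq]
  refine intervalIntegral.integral_congr_ae ?_
  filter_upwards [ae_neuron_eq_of_volume_Iact hθ] with s hs hs01
  rw [riskResidual, hs hs01, mfun_eq_of_volume_Iact hθ]
  ring

theorem sq_mul_sq_div_sub_le_riskL {f : ℝ → ℝ} (hf : ContinuousOn f (Icc 0 1)) {θ : ℝ³}
    (hθ : (volume (Iact θ)).toReal = 1) :
    (θ 2 * θ 0) ^ 2 / 24 - ∫ s in (0:ℝ)..1, (fbar f - f s) ^ 2 ≤ riskL f θ := by
  have hdev : ContinuousOn (fun s => (fbar f - f s) ^ 2) (Icc 0 1) :=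
    (continuousOn_const.sub hf).pow 2
  have hvar : ∫ s in (0:ℝ)..1, (s - 1 / 2) ^ 2 = 1 / 12 := by
    simp [intervalIntegral.integral_comp_sub_right fun s => s ^ 2]
    norm_num
  calc (θ 2 * θ 0) ^ 2 / 24 - ∫ s in (0:ℝ)..1, (fbar f - f s) ^ 2
      = ∫ s in (0:ℝ)..1, ((θ 2 * θ 0) ^ 2 / 2 * (s - 1 / 2) ^ 2 - (fbar f - f s) ^ 2) := by
        rw [intervalIntegral.integral_sub (Continuous.intervalIntegrable (by fun_prop) _ _)
          (hdev.intervalIntegrable_of_Icc zero_le_one),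
          intervalIntegral.integral_const_mul, hvar]
        ring
    _ ≤ ∫ s in (0:ℝ)..1, (θ 2 * θ 0 * (s - 1 / 2) + (fbar f - f s)) ^ 2 := by
        refine intervalIntegral.integral_mono_on zero_le_one
          (((by fun_prop : Continuous fun s : ℝ => (θ 2 * θ 0) ^ 2 / 2 * (s - 1 / 2) ^ 2)
            |>.continuousOn.sub hdev).intervalIntegrable_of_Icc zero_le_one)
          ((((by fun_prop : Continuous fun s : ℝ => θ 2 * θ 0 * (s - 1 / 2)).continuousOn.add
            (continuousOn_const.sub hf)).pow 2).intervalIntegrable_of_Icc zero_le_one)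
          fun s _ => ?_
        nlinarith [sq_nonneg (θ 2 * θ 0 * (s - 1 / 2) + 2 * (fbar f - f s))]
    _ = riskL f θ := (riskL_eq_of_volume_Iact f hθ).symm

theorem contDiff_gfun : ContDiff ℝ 1 gfun := by
  unfold gfun; fun_prop

theorem exists_lipschitzOnWith_gfun (R : ℝ≥0) :
    ∃ K, LipschitzOnWith K gfun (closedBall 0 R) :=
  contDiff_gfun.contDiffOn.exists_lipschitzOnWith one_ne_zero (convex_closedBall 0 R)
    (isCompact_closedBall 0 R)

theorem gradient_gfun_eq_zero {θ : ℝ³} (h0 : θ 0 = 0) (h1 : θ 1 = 0) : gradient gfun θ = 0 := by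
  have hmin : IsLocalMin gfun θ :=
    Filter.Eventually.of_forall fun y => by
      simpa [gfun, h0, h1] using (by positivity : 0 ≤ y 0 ^ 2 + y 1 ^ 2)
  simp [gradient, hmin.fderiv_eq_zero]

theorem inner_gradient_gfun_eq_zero {𝔊 : ℝ³ → ℝ³} {L : ℝ³ → ℝ}
    (h𝔊 : ∀ θ : ℝ³, 0 < |θ 0| + |θ 1| →
      𝔊 θ = gradient L θ -
        ((‖gradient gfun θ‖ ^ 2)⁻¹ * ⟪gradient L θ, gradient gfun θ⟫) • gradient gfun θ)
    (θ : ℝ³) : ⟪gradient gfun θ, 𝔊 θ⟫ = 0 := by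
  rcases (add_nonneg (abs_nonneg (θ 0)) (abs_nonneg (θ 1))).lt_or_eq' with hpos | hzero
  · rw [h𝔊 θ hpos]
    exact inner_sub_inner_smul_eq_zero _ _
  · rw [add_eq_zero_iff_of_nonneg (abs_nonneg _) (abs_nonneg _), abs_eq_zero, abs_eq_zero] at hzero
    rw [gradient_gfun_eq_zero hzero.1 hzero.2, inner_zero_left]

theorem norm_sq_eq_gfun_add (θ : ℝ³) : ‖θ‖ ^ 2 = gfun θ + θ 2 ^ 2 := by
  rw [EuclideanSpace.norm_sq_eq, Fin.sum_univ_three, gfun]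
  simp

theorem abs_add_abs_pos_of_gfun_eq_one {θ : ℝ³} (hθ : gfun θ = 1) : 0 < |θ 0| + |θ 1| := by
  by_contra! h
  have h0 : θ 0 = 0 := abs_eq_zero.1 (by linarith [abs_nonneg (θ 0), abs_nonneg (θ 1)])
  have h1 : θ 1 = 0 := abs_eq_zero.1 (by linarith [abs_nonneg (θ 0), abs_nonneg (θ 1)])
  simp [gfun, h0, h1] at hθ

theorem gfun_eq_of_eq_sub_integral {𝔊 : ℝ³ → ℝ³} {Θ : ℝ → ℝ³} {T : ℝ}
    (h𝔊loc : ∀ θ : ℝ³, ∃ r > (0:ℝ), ∃ C : ℝ, ∀ x ∈ ball θ r, ‖𝔊 x‖ ≤ C)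
    (h𝔊 : ∀ θ, ⟪gradient gfun θ, 𝔊 θ⟫ = 0) (hT : 0 ≤ T)
    (hint : IntervalIntegrable (fun u => 𝔊 (Θ u)) volume 0 T)
    (hΘ : ∀ t ∈ Icc 0 T, Θ t = Θ 0 - ∫ u in (0:ℝ)..t, 𝔊 (Θ u)) :
    gfun (Θ T) = gfun (Θ 0) := by
  have hac := absolutelyContinuousOnInterval_comp_of_eq_sub_integral h𝔊loc
    exists_lipschitzOnWith_gfun hT hint hΘ
  have hderiv : ∀ᵐ t, t ∈ uIcc 0 T → HasDerivAt (fun t => gfun (Θ t)) 0 t := by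
    rw [uIcc_of_le hT]
    filter_upwards [ae_hasDerivAt_of_eq_sub_integral hint hΘ] with t ht htT
    have h := (contDiff_gfun.differentiable one_ne_zero (Θ t)).hasGradientAt.comp_hasDerivAt
      (ht htT)
    rwa [inner_neg_right, h𝔊, neg_zero] at h
  obtain ⟨C, hC⟩ := hac.const_of_ae_hasDerivAt_zero hderiv
  rw [hC T right_mem_uIcc, hC 0 left_mem_uIcc]

theorem riskL_le_of_eq_sub_integral {f : ℝ → ℝ} (hf : ContinuousOn f (Icc 0 1))
    (h𝓛diff : ∀ θ : ℝ³, 0 < |θ 0| + |θ 1| → DifferentiableAt ℝ (riskL f) θ)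
    {𝔊 : ℝ³ → ℝ³} {Θ : ℝ → ℝ³} {T : ℝ}
    (h𝔊loc : ∀ θ : ℝ³, ∃ r > (0:ℝ), ∃ C : ℝ, ∀ x ∈ ball θ r, ‖𝔊 x‖ ≤ C)
    (h𝔊 : ∀ θ : ℝ³, 0 < |θ 0| + |θ 1| →
      𝔊 θ = gradient (riskL f) θ -
        ((‖gradient gfun θ‖ ^ 2)⁻¹ * ⟪gradient (riskL f) θ, gradient gfun θ⟫) •
          gradient gfun θ)
    (hT : 0 ≤ T) (hint : IntervalIntegrable (fun u => 𝔊 (Θ u)) volume 0 T)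
    (hΘ : ∀ t ∈ Icc 0 T, Θ t = Θ 0 - ∫ u in (0:ℝ)..t, 𝔊 (Θ u))
    (hg : ∀ t ∈ Icc 0 T, gfun (Θ t) = 1) :
    riskL f (Θ T) ≤ riskL f (Θ 0) := by
  refine (absolutelyContinuousOnInterval_comp_of_eq_sub_integral h𝔊loc
    (exists_lipschitzOnWith_riskL hf) hT hint hΘ).le_of_ae_hasDerivAt_nonpos hT
    (f' := fun t => -‖𝔊 (Θ t)‖ ^ 2) ?_ fun t _ => neg_nonpos.2 (sq_nonneg _)
  filter_upwards [ae_hasDerivAt_of_eq_sub_integral hint hΘ] with t ht htT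
  have hpos := abs_add_abs_pos_of_gfun_eq_one (hg t htT)
  convert (h𝓛diff _ hpos).hasGradientAt.comp_hasDerivAt (ht htT) using 1
  rw [inner_neg_right, h𝔊 _ hpos, inner_sub_inner_smul_eq_norm_sq]

theorem norm_le_of_riskL_le {f : ℝ → ℝ} (hf : ContinuousOn f (Icc 0 1)) {θ : ℝ³} {ε L : ℝ}
    (hε : 0 < ε) (hg : gfun θ = 1) (hεθ : ε ≤ |θ 0|) (hθ : (volume (Iact θ)).toReal = 1)
    (hL : riskL f θ ≤ L) :
    ‖θ‖ ≤ √(1 + 24 * (L + ∫ s in (0:ℝ)..1, (fbar f - f s) ^ 2) / ε ^ 2) := by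
  rw [← sqrt_sq (norm_nonneg θ), norm_sq_eq_gfun_add, hg]
  gcongr
  rw [le_div_iff₀ (by positivity)]
  have hε0 : ε ^ 2 ≤ θ 0 ^ 2 := by
    rw [← sq_abs (θ 0)]
    gcongr
  have := sq_mul_sq_div_sub_le_riskL hf hθ
  nlinarith [mul_le_mul_of_nonneg_left hε0 (sq_nonneg (θ 2))]

theorem stmt10_general
    (f : ℝ → ℝ) (hf : ContinuousOn f (Set.Icc 0 1))
    (h𝓛diff : ∀ θ : EuclideanSpace ℝ (Fin 3), 0 < |θ 0| + |θ 1| →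
      DifferentiableAt ℝ (riskL f) θ)
    (𝔊 : EuclideanSpace ℝ (Fin 3) → EuclideanSpace ℝ (Fin 3))
    (h𝔊loc : ∀ θ : EuclideanSpace ℝ (Fin 3),
      ∃ r > (0:ℝ), ∃ C : ℝ, ∀ x ∈ Metric.ball θ r, ‖𝔊 x‖ ≤ C)
    (h𝔊 : ∀ θ : EuclideanSpace ℝ (Fin 3), 0 < |θ 0| + |θ 1| →
      𝔊 θ = gradient (riskL f) θ -
        ((‖gradient gfun θ‖ ^ 2)⁻¹ * ⟪gradient (riskL f) θ, gradient gfun θ⟫) •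
          gradient gfun θ)
    (Θ : ℝ → EuclideanSpace ℝ (Fin 3))
    (hΘ0 : gfun (Θ 0) = 1)
    (hΘint : ∀ t : ℝ, 0 ≤ t → IntervalIntegrable (fun u => 𝔊 (Θ u)) volume 0 t)
    (hΘ : ∀ t : ℝ, 0 ≤ t → Θ t = Θ 0 - ∫ u in (0:ℝ)..t, 𝔊 (Θ u)) :
    ∀ ε : ℝ, 0 < ε → ∃ C : ℝ, ∀ t : ℝ, 0 ≤ t →
      ε ≤ |Θ t 0| → (volume (Iact (Θ t))).toReal = 1 → ‖Θ t‖ ≤ C := by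
  have hΘ' : ∀ T, ∀ t ∈ Icc 0 T, Θ t = Θ 0 - ∫ u in (0:ℝ)..t, 𝔊 (Θ u) :=
    fun _ t ht => hΘ t ht.1
  have hg : ∀ t, 0 ≤ t → gfun (Θ t) = 1 := fun t ht =>
    (gfun_eq_of_eq_sub_integral h𝔊loc (inner_gradient_gfun_eq_zero h𝔊) ht (hΘint t ht)
      (hΘ' t)).trans hΘ0
  intro ε hε
  refine ⟨_, fun t ht hεt hact => norm_le_of_riskL_le hf hε (hg t ht) hεt hact
    (riskL_le_of_eq_sub_integral hf h𝓛diff h𝔊loc h𝔊 ht (hΘint t ht) (hΘ' t)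
      fun u hu => hg u hu.1)⟩

/-- Lemma 3.6: the gradient flow trajectory is bounded on the set of times `t` at which
`|Θ₁(t)| ≥ ε` and the activity interval `I^{Θ(t)}` has full Lebesgue measure `1`. -/
theorem stmt10
    (f : ℝ → ℝ) (hf : ContinuousOn f (Set.Icc 0 1))
    (h𝓛diff : ∀ θ : EuclideanSpace ℝ (Fin 3), 0 < |θ 0| + |θ 1| →
      DifferentiableAt ℝ (riskL f) θ)
    (𝔊 : EuclideanSpace ℝ (Fin 3) → EuclideanSpace ℝ (Fin 3))
    (h𝔊meas : Measurable 𝔊)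
    (h𝔊loc : ∀ θ : EuclideanSpace ℝ (Fin 3),
      ∃ r > (0:ℝ), ∃ C : ℝ, ∀ x ∈ Metric.ball θ r, ‖𝔊 x‖ ≤ C)
    (h𝔊 : ∀ θ : EuclideanSpace ℝ (Fin 3), 0 < |θ 0| + |θ 1| →
      𝔊 θ = gradient (riskL f) θ -
        ((‖gradient gfun θ‖ ^ 2)⁻¹ * ⟪gradient (riskL f) θ, gradient gfun θ⟫) •
          gradient gfun θ)
    (Θ : ℝ → EuclideanSpace ℝ (Fin 3))
    (hΘ0 : gfun (Θ 0) = 1)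
    (hΘint : ∀ t : ℝ, 0 ≤ t → IntervalIntegrable (fun u => 𝔊 (Θ u)) volume 0 t)
    (hΘ : ∀ t : ℝ, 0 ≤ t → Θ t = Θ 0 - ∫ u in (0:ℝ)..t, 𝔊 (Θ u)) :
    ∀ ε : ℝ, 0 < ε → ∃ C : ℝ, ∀ t : ℝ, 0 ≤ t →
      ε ≤ |Θ t 0| → (volume (Iact (Θ t))).toReal = 1 → ‖Θ t‖ ≤ C :=
  stmt10_general f hf h𝓛diff 𝔊 h𝔊loc h𝔊 Θ hΘ0 hΘint hΘ
end
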